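/- arXiv:1904.01165 — 11 statements merged into one kernel-verified Lean document; each statement's English description precedes it below -/
import Mathlib

section
/- For k a real number with k^2 > 4 and all n ≥ 0, the k-Oresme number satisfies the Binet formula A_n^{(k)} = (1/√(k²-4)) · [((k+√(k²-4))/(2k))^n − ((k−√(k²-4))/(2k))^n]. -/
/-!
The characteristic equation of the recurrence is `x ^ 2 = x - 1 / k ^ 2`, whose roots are
`α, β = (k ± √(k² - 4)) / (2k)`. Both `α ^ n` and `β ^ n` satisfy the recurrence, hence so does
`(α ^ n - β ^ n) / √(k² - 4)`; it has the initial values `0` and `(α - β) / √(k² - 4) = 1 / k`,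
and a second-order recurrence is determined by its first two terms.
-/

section TwoStepRecurrence

variable {R : Type*} [CommRing R] {p q : R}

theorem eq_of_two_step_recurrence {u v : ℕ → R}
    (hu : ∀ n, u (n + 2) = p * u (n + 1) - q * u n)
    (hv : ∀ n, v (n + 2) = p * v (n + 1) - q * v n)
    (h0 : u 0 = v 0) (h1 : u 1 = v 1) (n : ℕ) : u n = v n := by
  induction n using Nat.twoStepInduction with
  | zero => exact h0
  | one => exact h1
  | more n ih₀ ih₁ => rw [hu, hv, ih₀, ih₁]

theorem pow_sub_pow_two_step_recurrence {α β : R} (hα : α ^ 2 = p * α - q)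
    (hβ : β ^ 2 = p * β - q) (c : R) (n : ℕ) :
    c * (α ^ (n + 2) - β ^ (n + 2)) =
      p * (c * (α ^ (n + 1) - β ^ (n + 1))) - q * (c * (α ^ n - β ^ n)) := by
  linear_combination c * α ^ n * hα - c * β ^ n * hβ

end TwoStepRecurrence

theorem oresme_root_sq {K : Type*} [Field K] (h2 : (2 : K) ≠ 0) {k s : K} (hk : k ≠ 0)
    (hs : s ^ 2 = k ^ 2 - 4) :
    ((k + s) / (2 * k)) ^ 2 = 1 * ((k + s) / (2 * k)) - 1 / k ^ 2 := by
  field_simp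
  linear_combination hs

theorem kOresme_binet (k : ℝ) (hk : k^2 > 4) (A : ℕ → ℝ)
    (h0 : A 0 = 0) (h1 : A 1 = 1/k)
    (hrec : ∀ n : ℕ, A (n+2) = A (n+1) - (1/k^2) * A n) :
    ∀ n : ℕ, A n = (1 / Real.sqrt (k^2 - 4)) *
      (((k + Real.sqrt (k^2 - 4)) / (2*k))^n - ((k - Real.sqrt (k^2 - 4)) / (2*k))^n) := by
  have hk0 : k ≠ 0 := by rintro rfl; norm_num at hk
  set s := Real.sqrt (k ^ 2 - 4)
  have hs : s ^ 2 = k ^ 2 - 4 := Real.sq_sqrt (by linarith)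
  have hs0 : s ≠ 0 := (Real.sqrt_pos.mpr (by linarith)).ne'
  have hα := oresme_root_sq two_ne_zero hk0 hs
  have hβ : ((k - s) / (2 * k)) ^ 2 = 1 * ((k - s) / (2 * k)) - 1 / k ^ 2 := by
    simpa only [← sub_eq_add_neg] using oresme_root_sq two_ne_zero hk0 (s := -s) (by rwa [neg_sq])
  refine eq_of_two_step_recurrence (p := 1) (fun n => by rw [hrec, one_mul])
    (pow_sub_pow_two_step_recurrence hα hβ _) ?_ ?_
  · simp [h0]
  · rw [h1]
    field_simp
    ring
end

section
/- For k ≠ 0 real and n ≥ 0, the partial sum of k-Oresme numbers satisfies ∑_{j=0}^{n} A_j^{(k)} = k²·(1/k − A_{n+2}^{(k)}). -/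
theorem kOresme_sum (k : ℝ) (hk : k ≠ 0) (A : ℕ → ℝ)
    (h0 : A 0 = 0) (h1 : A 1 = 1/k)
    (hrec : ∀ n : ℕ, A (n+2) = A (n+1) - (1/k^2) * A n) :
    ∀ n : ℕ, ∑ j ∈ Finset.range (n+1), A j = k^2 * (1/k - A (n+2)) := by
  intro n
  induction n with
  | zero =>
    simp [hrec 0, h0, h1]
  | succ m ih =>
    rw [Finset.sum_range_succ, ih, hrec (m+1)]
    field_simp
    ring
end

section
/- For k ≠ 0 real and n ≥ 1, the Cassini identity for k-Oresme numbers holds: A_{n+1}^{(k)}·A_{n−1}^{(k)} − (A_n^{(k)})² = −(1/k²)^n. -/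
theorem kOresme_cassini (k : ℝ) (hk : k ≠ 0) (A : ℕ → ℝ)
    (h0 : A 0 = 0) (h1 : A 1 = 1/k)
    (hrec : ∀ n : ℕ, A (n+2) = A (n+1) - (1/k^2) * A n) :
    ∀ n : ℕ, 1 ≤ n → A (n+1) * A (n-1) - (A n)^2 = -(1/k^2)^n := by
  intro n hn
  induction n with
  | zero => omega
  | succ m ih =>
    rcases Nat.eq_zero_or_pos m with hm | hm
    · subst hm
      simp [hrec 0, h0, h1]
    · have ihm := ih hm
      have hm1 : m - 1 + 1 = m := Nat.succ_pred_eq_of_pos hm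
      have hr : A (m + 1) = A m - (1/k^2) * A (m-1) := by
        have := hrec (m-1)
        rw [show m - 1 + 2 = m + 1 by omega, hm1] at this
        exact this
      simp only [Nat.add_sub_cancel]
      rw [hr] at ihm
      rw [hrec m, hr]
      linear_combination (1/k^2) * ihm
end

section
/- For all n ≥ 0, the Oresme polynomial evaluated at x = 3 satisfies O_n(3) = F_{2n}/3^n, where F_m denotes the m-th Fibonacci number. -/
noncomputable def oresme : ℕ → ℝ → ℝ
  | 0 => fun _ => 0
  | 1 => fun x => 1/x
  | (n+2) => fun x => oresme (n+1) x - (1/x^2) * oresme n x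

theorem oresme_at_three (n : ℕ) : oresme n 3 = (Nat.fib (2*n) : ℝ) / 3^n := by
  induction n using Nat.twoStepInduction with
  | zero => simp [oresme]
  | one => norm_num [oresme]
  | more n ih2 ih1 =>
    have h : Nat.fib (2*(n+2)) + Nat.fib (2*n) = 3 * Nat.fib (2*(n+1)) := by
      have e1 : 2*(n+2) = (2*n) + 2 + 2 := by ring
      have e2 : 2*(n+1) = (2*n) + 2 := by ring
      have a := Nat.fib_add_two (n := 2*n)
      have b := Nat.fib_add_two (n := 2*n+1)
      have c := Nat.fib_add_two (n := 2*n+2)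
      ring_nf at a b c ⊢
      omega
    have h' : (Nat.fib (2*(n+2)) : ℝ) = 3 * Nat.fib (2*(n+1)) - Nat.fib (2*n) := by
      have := congrArg (Nat.cast : ℕ → ℝ) h
      push_cast at this
      linarith
    show oresme (n+1) 3 - (1/3^2) * oresme n 3 = _
    rw [ih1, ih2, h']
    field_simp
    ring
end

section
/- For a real number x with x² > 4 and all n ≥ 0, the Binet formula O_n(x) = (1/√(x²−4))·(λ₁(x)^n − λ₂(x)^n) holds, where λ₁(x) = (x+√(x²−4))/(2x) and λ₂(x) = (x−√(x²−4))/(2x). -/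
theorem pow_sub_pow_add_two {R : Type*} [CommRing R] {a b c : R}
    (ha : a ^ 2 = a - c) (hb : b ^ 2 = b - c) (n : ℕ) :
    a ^ (n + 2) - b ^ (n + 2) = (a ^ (n + 1) - b ^ (n + 1)) - c * (a ^ n - b ^ n) := by
  linear_combination a ^ n * ha - b ^ n * hb

theorem sq_oresme_root {x s : ℝ} (hx : x ≠ 0) (hs : s ^ 2 = x ^ 2 - 4) :
    ((x + s) / (2 * x)) ^ 2 = (x + s) / (2 * x) - 1 / x ^ 2 := by
  field_simp
  linear_combination hs

theorem mul_oresme_eq_pow_sub_pow {x s : ℝ} (hx : x ≠ 0) (hs : s ^ 2 = x ^ 2 - 4) (n : ℕ) :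
    s * oresme n x = ((x + s) / (2 * x)) ^ n - ((x - s) / (2 * x)) ^ n := by
  have hroot₁ := sq_oresme_root hx hs
  have hroot₂ : ((x - s) / (2 * x)) ^ 2 = (x - s) / (2 * x) - 1 / x ^ 2 := by
    simpa only [sub_eq_add_neg] using sq_oresme_root hx (by rw [neg_sq, hs])
  induction n using Nat.twoStepInduction with
  | zero => simp [oresme]
  | one =>
    simp only [oresme, pow_one]
    field_simp
    ring
  | more n ih₀ ih₁ =>
    rw [pow_sub_pow_add_two hroot₁ hroot₂, ← ih₀, ← ih₁, oresme]
    ring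

theorem oresme_binet (x : ℝ) (hx : x^2 > 4) (n : ℕ) :
    oresme n x = (1 / Real.sqrt (x^2 - 4)) *
      (((x + Real.sqrt (x^2 - 4)) / (2*x))^n - ((x - Real.sqrt (x^2 - 4)) / (2*x))^n) := by
  have hx₀ : x ≠ 0 := by
    rintro rfl
    norm_num at hx
  have hpos : 0 < x ^ 2 - 4 := by linarith
  have hs : Real.sqrt (x ^ 2 - 4) ≠ 0 := (Real.sqrt_pos.mpr hpos).ne'
  rw [← mul_oresme_eq_pow_sub_pow hx₀ (Real.sq_sqrt hpos.le), one_div, inv_mul_cancel_left₀ hs]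
end

section
/- For real x > 2, the ratio of consecutive Oresme polynomials converges: lim_{n→∞} O_{n+1}(x)/O_n(x) = (x+√(x²−4))/(2x). -/
open Filter Topology

theorem tendsto_pow_succ_sub_pow_succ_div_pow_sub_pow {𝕜 : Type*} [NormedField 𝕜] {a b : 𝕜}
    (hba : ‖b‖ < ‖a‖) :
    Tendsto (fun n : ℕ => (a ^ (n + 1) - b ^ (n + 1)) / (a ^ n - b ^ n)) atTop (𝓝 a) := by
  have ha : a ≠ 0 := norm_pos_iff.mp ((norm_nonneg b).trans_lt hba)
  have hq : Tendsto (fun n : ℕ => (b / a) ^ n) atTop (𝓝 0) :=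
    tendsto_pow_atTop_nhds_zero_of_norm_lt_one <| by
      rwa [norm_div, div_lt_one (hba.trans_le' (norm_nonneg b))]
  have hlim : Tendsto (fun n : ℕ => (a - b * (b / a) ^ n) / (1 - (b / a) ^ n)) atTop
      (𝓝 ((a - b * 0) / (1 - 0))) :=
    (tendsto_const_nhds.sub (tendsto_const_nhds.mul hq)).div (tendsto_const_nhds.sub hq)
      (by norm_num)
  rw [mul_zero, sub_zero, sub_zero, div_one] at hlim
  refine hlim.congr fun n => ?_
  rw [← mul_div_mul_right _ _ (pow_ne_zero n ha)]
  simp only [div_pow]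
  congr 1 <;> field_simp
  ring

theorem oresme_mul_eq_pow_sub_pow {x a b : ℝ} (hx : x ≠ 0) (hsum : a + b = 1)
    (hprod : a * b = 1 / x ^ 2) (n : ℕ) :
    oresme n x * (x * (a - b)) = a ^ n - b ^ n := by
  induction n using Nat.twoStepInduction with
  | zero => simp [oresme]
  | one => simp only [oresme]; field_simp
  | more n ih₀ ih₁ =>
    simp only [oresme]
    linear_combination ih₁ - (1 / x ^ 2) * ih₀ - (a ^ (n + 1) - b ^ (n + 1)) * hsum
      + (a ^ n - b ^ n) * hprod

theorem oresme_succ_div_oresme {x a b : ℝ} (hx : x ≠ 0) (hab : a ≠ b) (hsum : a + b = 1)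
    (hprod : a * b = 1 / x ^ 2) (n : ℕ) :
    oresme (n + 1) x / oresme n x = (a ^ (n + 1) - b ^ (n + 1)) / (a ^ n - b ^ n) := by
  rw [← oresme_mul_eq_pow_sub_pow hx hsum hprod, ← oresme_mul_eq_pow_sub_pow hx hsum hprod,
    mul_div_mul_right _ _ (mul_ne_zero hx (sub_ne_zero.mpr hab))]

theorem oresme_ratio_limit (x : ℝ) (hx : 2 < x) :
    Filter.Tendsto (fun n : ℕ => oresme (n+1) x / oresme n x) Filter.atTop
      (nhds ((x + Real.sqrt (x^2 - 4)) / (2*x))) := by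
  have hx0 : 0 < x := by linarith
  set s := Real.sqrt (x ^ 2 - 4)
  have hs2 : s ^ 2 = x ^ 2 - 4 := Real.sq_sqrt (by nlinarith)
  have hs : 0 < s := Real.sqrt_pos.mpr (by nlinarith)
  set a := (x + s) / (2 * x) with ha
  set b := (x - s) / (2 * x) with hb
  have hsum : a + b = 1 := by rw [ha, hb]; field_simp; ring
  have hprod : a * b = 1 / x ^ 2 := by rw [ha, hb]; field_simp; linear_combination -hs2
  have hba : b < a := div_lt_div_of_pos_right (by linarith) (by positivity)
  have hnorm : ‖b‖ < ‖a‖ := by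
    rw [Real.norm_eq_abs, Real.norm_eq_abs, abs_of_pos (by positivity : 0 < a)]
    exact abs_lt.mpr ⟨by linarith, hba⟩
  simp_rw [oresme_succ_div_oresme hx0.ne' hba.ne' hsum hprod]
  exact tendsto_pow_succ_sub_pow_succ_div_pow_sub_pow hnorm
end

section
/- For real x ≠ 0 and all n ≥ 1, the n-th power of the matrix M(x) = [[1, −1/x²], [1, 0]] equals [[x·O_{n+1}(x), −(1/x)·O_n(x)], [x·O_n(x), −(1/x)·O_{n−1}(x)]]. -/
theorem matrix_pow_succ_eq_of_recurrence {R : Type*} [CommRing R] (c : R) (a : ℕ → R)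
    (h0 : a 0 = 0) (h1 : a 1 = 1) (hrec : ∀ n, a (n + 2) = a (n + 1) - c * a n) (n : ℕ) :
    !![1, -c; 1, 0] ^ (n + 1) = !![a (n + 2), -c * a (n + 1); a (n + 1), -c * a n] := by
  induction n with
  | zero => simp [hrec, h0, h1]
  | succ n ih =>
    rw [pow_succ, ih, Matrix.mul_fin_two, hrec (n + 1), hrec n]
    congr 1
    simp only [Matrix.vecCons_inj, and_true]
    refine ⟨⟨?_, ?_⟩, ?_, ?_⟩ <;> ring

theorem one_div_sq_mul_mul {K : Type*} [Field K] (x y : K) : 1 / x ^ 2 * (x * y) = 1 / x * y := by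
  rcases eq_or_ne x 0 with rfl | hx
  · simp
  · field_simp

theorem mul_oresme_one {x : ℝ} (hx : x ≠ 0) : x * oresme 1 x = 1 := by
  simp [oresme, hx]

theorem mul_oresme_add_two (x : ℝ) (n : ℕ) :
    x * oresme (n + 2) x = x * oresme (n + 1) x - 1 / x ^ 2 * (x * oresme n x) := by
  rw [oresme]
  ring

theorem oresme_matrix_power (x : ℝ) (hx : x ≠ 0) (n : ℕ) (hn : 1 ≤ n) :
    (!![1, -(1/x^2); 1, 0] : Matrix (Fin 2) (Fin 2) ℝ) ^ n =
      !![x * oresme (n+1) x, -(1/x) * oresme n x;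
         x * oresme n x, -(1/x) * oresme (n-1) x] := by
  obtain ⟨m, rfl⟩ := Nat.exists_eq_add_of_le' hn
  rw [matrix_pow_succ_eq_of_recurrence (1 / x ^ 2) (fun k => x * oresme k x)
    (by simp [oresme]) (mul_oresme_one hx) (mul_oresme_add_two x)]
  simp only [neg_mul, one_div_sq_mul_mul, Nat.add_sub_cancel]
end

section
/- For real x ≠ 0 and all n ≥ 1, the Cassini identity O_{n+1}(x)·O_{n−1}(x) − O_n(x)² = −1/x^{2n} holds for the Oresme polynomials. -/
theorem cassini_of_recurrence {R : Type*} [CommRing R] (a : ℕ → R) (c : R)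
    (h : ∀ n, a (n + 2) = a (n + 1) + c * a n) (n : ℕ) :
    a (n + 2) * a n - a (n + 1) ^ 2 = (-c) ^ n * (a 2 * a 0 - a 1 ^ 2) := by
  induction n with
  | zero => simp
  | succ n ih =>
    calc a (n + 3) * a (n + 1) - a (n + 2) ^ 2
        = -c * (a (n + 2) * a n - a (n + 1) ^ 2) := by
          rw [h (n + 1), h n]; ring
      _ = (-c) ^ (n + 1) * (a 2 * a 0 - a 1 ^ 2) := by rw [ih]; ring

theorem oresme_add_two (n : ℕ) (x : ℝ) :
    oresme (n + 2) x = oresme (n + 1) x + -(1 / x ^ 2) * oresme n x := by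
  rw [oresme]; ring

theorem oresme_cassini_general (x : ℝ) (n : ℕ) (hn : 1 ≤ n) :
    oresme (n+1) x * oresme (n-1) x - (oresme n x)^2 = -(1 / x^(2*n)) := by
  obtain ⟨m, rfl⟩ := Nat.exists_eq_add_of_le' hn
  have h := cassini_of_recurrence (oresme · x) _ (fun k ↦ oresme_add_two k x) m
  have h0 : oresme 0 x = 0 := rfl
  have h1 : oresme 1 x = 1 / x := rfl
  rw [Nat.add_sub_cancel, h, h0, h1, neg_neg, pow_mul, one_div_pow, pow_succ]
  ring

theorem oresme_cassini (x : ℝ) (hx : x ≠ 0) (n : ℕ) (hn : 1 ≤ n) :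
    oresme (n+1) x * oresme (n-1) x - (oresme n x)^2 = -(1 / x^(2*n)) :=
  oresme_cassini_general x n hn
end

section
/- For real x ≠ 0 and all n, m ≥ 1, the addition formula O_{n+m}(x) = x·O_n(x)·O_{m+1}(x) − (1/x)·O_{n−1}(x)·O_m(x) holds. -/
lemma oresme_rec (x : ℝ) (k : ℕ) :
    oresme (k+2) x = oresme (k+1) x - (1/x^2) * oresme k x := rfl

lemma oresme_key (x : ℝ) (hx : x ≠ 0) (k : ℕ) : ∀ m,
    oresme (k+1+(m+1)) x
      = x * oresme (k+1) x * oresme (m+2) x - (1/x) * oresme k x * oresme (m+1) x := by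
  intro m
  induction m using Nat.twoStepInduction with
  | zero =>
      have h1 : oresme (k+1+1) x = oresme (k+1) x - (1/x^2) * oresme k x := oresme_rec x k
      rw [show k+1+(0+1) = k+2 from rfl, oresme_rec x k]
      simp only [oresme]
      field_simp
      ring
  | one =>
      have h1 : oresme (k+2) x = oresme (k+1) x - (1/x^2) * oresme k x := oresme_rec x k
      have h2 : oresme (k+3) x = oresme (k+2) x - (1/x^2) * oresme (k+1) x := oresme_rec x (k+1)
      have : k+1+2 = k+3 := by ring
      rw [this, h2, h1]
      simp only [oresme]
      field_simp
      ring
  | more m ih1 ih2 =>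
      have e1 : k+1+(m+2+1) = (k+1+(m+1))+2 := by ring
      have e2 : k+1+(m+1+1) = (k+1+(m+1))+1 := by ring
      rw [e1, oresme_rec, ← e2, ih2, ih1,
        show m+2+2 = (m+2)+2 from rfl, oresme_rec x (m+2),
        oresme_rec x (m+1)]
      ring

theorem oresme_addition (x : ℝ) (hx : x ≠ 0) (n m : ℕ) (hn : 1 ≤ n) (hm : 1 ≤ m) :
    oresme (n+m) x = x * oresme n x * oresme (m+1) x - (1/x) * oresme (n-1) x * oresme m x := by
  obtain ⟨k, rfl⟩ := Nat.exists_eq_add_of_le hn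
  obtain ⟨l, rfl⟩ := Nat.exists_eq_add_of_le hm
  have := oresme_key x hx k l
  simpa [Nat.add_comm 1 k, Nat.add_comm 1 l, Nat.add_sub_cancel] using this
end

section
/- For real x ≠ 0 and nonnegative integers a, b, c, d, t with a+b = c+d, a, b, c, d ≥ t, the general bilinear index-reduction formula holds: O_a(x)·O_b(x) − O_c(x)·O_d(x) = (1/x^{2t})·(O_{a−t}(x)·O_{b−t}(x) − O_{c−t}(x)·O_{d−t}(x)). -/
noncomputable def oresmeD (x : ℝ) (m n : ℕ) : ℝ :=
  x^2 * (oresme (m+1) x * oresme (n+1) x) - oresme m x * oresme n x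

lemma oresme_x0 : ∀ n : ℕ, oresme n (0:ℝ) = 0
  | 0 => rfl
  | 1 => by simp [oresme]
  | (n+2) => by
      have h1 := oresme_x0 (n+1)
      have h2 := oresme_x0 n
      simp [oresme, h1, h2]

lemma oresmeD_swap (x : ℝ) (m n : ℕ) :
    oresmeD x (m+1) n = oresmeD x m (n+1) := by
  simp only [oresmeD]
  have h1 : oresme (m+2) x = oresme (m+1) x - (1/x^2) * oresme m x := rfl
  have h2 : oresme (n+2) x = oresme (n+1) x - (1/x^2) * oresme n x := rfl
  rcases eq_or_ne x 0 with h | h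
  · simp [h1, h2, h, oresme_x0]
  · rw [h1, h2]; field_simp; ring

lemma oresmeD_const (x : ℝ) : ∀ m n : ℕ, oresmeD x m n = oresmeD x 0 (m+n) := by
  intro m
  induction m with
  | zero => intro n; rw [Nat.zero_add]
  | succ k ih =>
    intro n
    rw [oresmeD_swap, ih (n+1)]
    congr 1
    omega

lemma oresmeD_eq (x : ℝ) {m n p q : ℕ} (h : m + n = p + q) :
    oresmeD x m n = oresmeD x p q := by
  rw [oresmeD_const x m n, oresmeD_const x p q, h]

lemma oresme_step (x : ℝ) (hx : x ≠ 0) {m n p q : ℕ} (h : m + n = p + q) :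
    oresme (m+1) x * oresme (n+1) x - oresme (p+1) x * oresme (q+1) x =
      (1 / x^2) * (oresme m x * oresme n x - oresme p x * oresme q x) := by
  have hD := oresmeD_eq x h
  simp only [oresmeD] at hD
  field_simp
  linarith

theorem oresme_bilinear_index_reduction (x : ℝ) (hx : x ≠ 0) (a b c d t : ℕ)
    (habcd : a + b = c + d) (ha : t ≤ a) (hb : t ≤ b) (hc : t ≤ c) (hd : t ≤ d) :
    oresme a x * oresme b x - oresme c x * oresme d x =
      (1 / x^(2*t)) * (oresme (a-t) x * oresme (b-t) x - oresme (c-t) x * oresme (d-t) x) := by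
  induction t with
  | zero => simp
  | succ k ih =>
    have hk : oresme a x * oresme b x - oresme c x * oresme d x =
        (1 / x^(2*k)) * (oresme (a-k) x * oresme (b-k) x - oresme (c-k) x * oresme (d-k) x) :=
      ih (by omega) (by omega) (by omega) (by omega)
    have hstep : oresme (a-k) x * oresme (b-k) x - oresme (c-k) x * oresme (d-k) x =
        (1 / x^2) * (oresme (a-(k+1)) x * oresme (b-(k+1)) x -
          oresme (c-(k+1)) x * oresme (d-(k+1)) x) := by
      have hA : a - k = (a - (k+1)) + 1 := by omega
      have hB : b - k = (b - (k+1)) + 1 := by omega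
      have hC : c - k = (c - (k+1)) + 1 := by omega
      have hD : d - k = (d - (k+1)) + 1 := by omega
      rw [hA, hB, hC, hD]
      exact oresme_step x hx (by omega)
    rw [hk, hstep]
    rw [show 2*(k+1) = 2*k + 2 by ring, pow_add]
    field_simp
end

section
/- For real x ≠ 0 and integers m ≥ n ≥ 0, the identity O_{n+1}(x)·O_m(x) − O_n(x)·O_{m+1}(x) = (1/x^{2n+1})·O_{m−n}(x) holds. -/
lemma oresme_aux (x : ℝ) (hx : x ≠ 0) (n k : ℕ) :
    oresme (n+1) x * oresme (n+k) x - oresme n x * oresme (n+k+1) x =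
      (1 / x^(2*n+1)) * oresme k x := by
  induction n with
  | zero => simp [oresme]
  | succ n ih =>
    have h1 : oresme (n+2) x = oresme (n+1) x - (1/x^2) * oresme n x := rfl
    have he : n+1+k+1 = n+k+2 := by omega
    have h2 : oresme (n+1+k+1) x = oresme (n+k+1) x - (1/x^2) * oresme (n+k) x := by
      rw [he]; rfl
    have h3 : n+1+k = n+k+1 := by ring
    rw [h1, h2, h3]
    have : (1 / x^2) * ((1 / x^(2*n+1)) * oresme k x) = (1 / x^(2*(n+1)+1)) * oresme k x := by
      rw [← mul_assoc, div_mul_div_comm, one_mul, ← pow_add]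
      have : 2 + (2*n+1) = 2*(n+1)+1 := by omega
      rw [this]
    rw [← this, ← ih]
    ring

theorem oresme_dOcagne (x : ℝ) (hx : x ≠ 0) (n m : ℕ) (hnm : n ≤ m) :
    oresme (n+1) x * oresme m x - oresme n x * oresme (m+1) x =
      (1 / x^(2*n+1)) * oresme (m-n) x := by
  obtain ⟨k, rfl⟩ := Nat.exists_eq_add_of_le hnm
  simpa using oresme_aux x hx n k
end
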